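/- arXiv:1512.03018 — 10 statements merged into one kernel-verified Lean document; each statement's English description precedes it below -/
import Mathlib

section
/- Let h : ℝ → ℝ be a C² function with h(x) > 0 for all x, solving the solitary-wave profile ODE on all of ℝ, and such that h(x) → H₀ and h'(x) → 0 as x → +∞. Then the first-integral identity holds at every point x ∈ ℝ: (c/3)·(c·H₀² − v♯∞·h(x)²)·(h'(x))² = (h(x) − H₀)²·(c² − g·h(x) − (h(x)·(h(x) + 2H₀)/H₀³)·E∞ − (h(x)²·(h(x) + H₀)²/H₀⁵)·(F∞/c)). -/
/-!
Divided by `h²`, the profile equation becomes `2 m(h) h'' + m'(h) h'² = W'(h)` with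
`m(u) = (c/3)(c H₀²/u² - v♯∞)` and `W(u)` the right-hand side of the identity divided by `u²`.
This is the Euler–Lagrange equation of a Lagrangian `m(u) u'² + W(u)`, so the energy
`m(h) h'² - W(h)` has derivative `h' (2 m(h) h'' + m'(h) h'² - W'(h)) = 0`. It is therefore
constant, and its limit at `+∞` is `-W(H₀) = 0`.
-/

open Filter Topology

theorem eq_of_forall_hasDerivAt_zero_of_tendsto
    {E : Type*} [NormedAddCommGroup E] [NormedSpace ℝ E] {f : ℝ → E} {L : E}
    (hf : ∀ x, HasDerivAt f 0 x) (hL : Tendsto f atTop (𝓝 L)) (x : ℝ) :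
    f x = L := by
  have hconst : f = fun _ => f x :=
    funext fun y => is_const_of_deriv_eq_zero (fun z => (hf z).differentiableAt)
      (fun z => (hf z).deriv) y x
  rw [hconst] at hL
  exact tendsto_nhds_unique tendsto_const_nhds hL

theorem hasDerivAt_energy {m W u v : ℝ → ℝ} {m' W' a x : ℝ}
    (hm : HasDerivAt m m' (u x)) (hW : HasDerivAt W W' (u x))
    (hu : HasDerivAt u (v x) x) (hv : HasDerivAt v a x) :
    HasDerivAt (fun y => m (u y) * v y ^ 2 - W (u y))
      (v x * (2 * m (u x) * a + m' * v x ^ 2 - W')) x :=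
  (((hm.comp x hu).mul (hv.pow 2)).sub (hW.comp x hu)).congr_deriv
    (by simp only [Function.comp_apply, Pi.pow_apply]; ring)

theorem energy_eq_neg_of_tendsto {m m' W W' u : ℝ → ℝ} {L : ℝ}
    (hu : Differentiable ℝ u) (hu' : Differentiable ℝ (deriv u))
    (hm : ∀ x, HasDerivAt m (m' (u x)) (u x)) (hW : ∀ x, HasDerivAt W (W' (u x)) (u x))
    (hode : ∀ x, 2 * m (u x) * deriv (deriv u) x + m' (u x) * deriv u x ^ 2 = W' (u x))
    (hmL : ContinuousAt m L) (hWL : ContinuousAt W L)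
    (hlim : Tendsto u atTop (𝓝 L)) (hlim' : Tendsto (deriv u) atTop (𝓝 0)) (x : ℝ) :
    m (u x) * deriv u x ^ 2 - W (u x) = -W L := by
  refine eq_of_forall_hasDerivAt_zero_of_tendsto
    (f := fun y => m (u y) * deriv u y ^ 2 - W (u y)) (fun y => ?_) ?_ x
  · simpa [hode y] using hasDerivAt_energy (hm y) (hW y) (hu y).hasDerivAt (hu' y).hasDerivAt
  · simpa using ((hmL.tendsto.comp hlim).mul (hlim'.pow 2)).sub (hWL.tendsto.comp hlim)

noncomputable section

def solitaryMass (H₀ c vs u : ℝ) : ℝ := c / 3 * (c * H₀ ^ 2 / u ^ 2 - vs)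

def solitaryPotential (g H₀ c Einf Finf u : ℝ) : ℝ :=
  (u - H₀) ^ 2 * (c ^ 2 - g * u - (u * (u + 2 * H₀) / H₀ ^ 3) * Einf
    - (u ^ 2 * (u + H₀) ^ 2 / H₀ ^ 5) * (Finf / c)) / u ^ 2

def solitaryForce (g H₀ c Einf Finf u : ℝ) : ℝ :=
  ((u - H₀) / (2 * u)) * (2 * c ^ 2 * H₀ - g * u * (u + H₀)) - (u ^ 3 / H₀ ^ 3 - 1) * Einf
    - 2 * (Finf / c) * ((u ^ 2 - H₀ ^ 2) * u ^ 3 / H₀ ^ 5)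

end

section

variable {g H₀ c vs Einf Finf u p a : ℝ}

theorem hasDerivAt_solitaryMass (hu : u ≠ 0) :
    HasDerivAt (solitaryMass H₀ c vs) (-(2 * c ^ 2 * H₀ ^ 2) / (3 * u ^ 3)) u := by
  have := (((hasDerivAt_pow 2 u).inv (pow_ne_zero 2 hu)).const_mul (c * H₀ ^ 2)).sub_const vs
    |>.const_mul (c / 3)
  refine (this.congr_deriv ?_).congr_of_eventuallyEq (Eventually.of_forall fun y => ?_)
  · field_simp; ring
  · simp [solitaryMass, div_eq_mul_inv]

theorem hasDerivAt_solitaryPotential (hH : H₀ ≠ 0) (hu : u ≠ 0) :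
    HasDerivAt (solitaryPotential g H₀ c Einf Finf)
      (2 * solitaryForce g H₀ c Einf Finf u / u ^ 2) u := by
  have hid := hasDerivAt_id u
  have hE := ((hid.mul (hid.add_const (2 * H₀))).div_const (H₀ ^ 3)).mul_const Einf
  have hF := (((hid.pow 2).mul ((hid.add_const H₀).pow 2)).div_const (H₀ ^ 5)).mul_const (Finf / c)
  have := (((hid.sub_const H₀).pow 2).mul
    ((((hasDerivAt_const u (c ^ 2)).sub (hid.const_mul g)).sub hE).sub hF)).div
    (hid.pow 2) (pow_ne_zero 2 hu)
  refine this.congr_deriv ?_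
  simp only [solitaryForce, Pi.pow_apply, Pi.mul_apply, Pi.sub_apply, id]
  field_simp
  ring

theorem solitaryPotential_self : solitaryPotential g H₀ c Einf Finf H₀ = 0 := by
  simp [solitaryPotential]

theorem solitaryMass_euler_lagrange (hu : u ≠ 0)
    (hode : 1 / 3 * c * (c * H₀ ^ 2 - vs * u ^ 2) * a =
      solitaryForce g H₀ c Einf Finf u + c ^ 2 / 3 * H₀ ^ 2 * p ^ 2 / u) :
    2 * solitaryMass H₀ c vs u * a + -(2 * c ^ 2 * H₀ ^ 2) / (3 * u ^ 3) * p ^ 2 =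
      2 * solitaryForce g H₀ c Einf Finf u / u ^ 2 := by
  simp only [solitaryMass, solitaryForce] at hode ⊢
  generalize Finf / c = k at hode ⊢
  field_simp at hode ⊢
  linear_combination hode

theorem first_integral_of_energy_eq (hH : H₀ ≠ 0) (hu : u ≠ 0)
    (henergy : solitaryMass H₀ c vs u * p ^ 2 = solitaryPotential g H₀ c Einf Finf u) :
    c / 3 * (c * H₀ ^ 2 - vs * u ^ 2) * p ^ 2 =
      (u - H₀) ^ 2 * (c ^ 2 - g * u - (u * (u + 2 * H₀) / H₀ ^ 3) * Einf
        - (u ^ 2 * (u + H₀) ^ 2 / H₀ ^ 5) * (Finf / c)) := by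
  simp only [solitaryMass, solitaryPotential] at henergy
  generalize Finf / c = k at henergy ⊢
  field_simp at henergy ⊢
  linear_combination henergy

end

theorem first_integral_identity_general
    (g H₀ c vs Einf Finf : ℝ) (hH : 0 < H₀)
    (h : ℝ → ℝ) (hC2 : ContDiff ℝ 2 h) (hpos : ∀ x, 0 < h x)
    (hode : ∀ x, (1/3) * c * (c * H₀ ^ 2 - vs * (h x) ^ 2) * deriv (deriv h) x =
      ((h x - H₀) / (2 * h x)) * (2 * c ^ 2 * H₀ - g * h x * (h x + H₀))
        - ((h x) ^ 3 / H₀ ^ 3 - 1) * Einf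
        - 2 * (Finf / c) * (((h x) ^ 2 - H₀ ^ 2) * (h x) ^ 3 / H₀ ^ 5)
        + (c ^ 2 / 3) * H₀ ^ 2 * (deriv h x) ^ 2 / h x)
    (hlim : Tendsto h atTop (nhds H₀))
    (hlim' : Tendsto (deriv h) atTop (nhds 0)) :
    ∀ x, (c / 3) * (c * H₀ ^ 2 - vs * (h x) ^ 2) * (deriv h x) ^ 2 =
      (h x - H₀) ^ 2 * (c ^ 2 - g * h x - (h x * (h x + 2 * H₀) / H₀ ^ 3) * Einf
        - ((h x) ^ 2 * (h x + H₀) ^ 2 / H₀ ^ 5) * (Finf / c)) := by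
  intro x
  have hH₀ : H₀ ≠ 0 := hH.ne'
  have hh : ∀ x, h x ≠ 0 := fun x => (hpos x).ne'
  have henergy := energy_eq_neg_of_tendsto
    (m' := fun u => -(2 * c ^ 2 * H₀ ^ 2) / (3 * u ^ 3))
    (W' := fun u => 2 * solitaryForce g H₀ c Einf Finf u / u ^ 2)
    (hC2.differentiable two_ne_zero) hC2.differentiable_deriv_two
    (fun x => hasDerivAt_solitaryMass (hh x)) (fun x => hasDerivAt_solitaryPotential hH₀ (hh x))
    (fun x => solitaryMass_euler_lagrange (hh x) (hode x))
    (hasDerivAt_solitaryMass hH₀).continuousAt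
    (hasDerivAt_solitaryPotential hH₀ hH₀).continuousAt hlim hlim' x
  rw [solitaryPotential_self, neg_zero, sub_eq_zero] at henergy
  exact first_integral_of_energy_eq hH₀ (hh x) henergy

/-- First-integral identity for the solitary-wave profile ODE of the
Green–Naghdi equations with vorticity. -/
theorem first_integral_identity
    (g H₀ c vs Einf Finf : ℝ) (hg : 0 < g) (hH : 0 < H₀) (hc : c ≠ 0)
    (h : ℝ → ℝ) (hC2 : ContDiff ℝ 2 h) (hpos : ∀ x, 0 < h x)
    (hode : ∀ x, (1/3) * c * (c * H₀ ^ 2 - vs * (h x) ^ 2) * deriv (deriv h) x =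
      ((h x - H₀) / (2 * h x)) * (2 * c ^ 2 * H₀ - g * h x * (h x + H₀))
        - ((h x) ^ 3 / H₀ ^ 3 - 1) * Einf
        - 2 * (Finf / c) * (((h x) ^ 2 - H₀ ^ 2) * (h x) ^ 3 / H₀ ^ 5)
        + (c ^ 2 / 3) * H₀ ^ 2 * (deriv h x) ^ 2 / h x)
    (hlim : Tendsto h atTop (nhds H₀))
    (hlim' : Tendsto (deriv h) atTop (nhds 0)) :
    ∀ x, (c / 3) * (c * H₀ ^ 2 - vs * (h x) ^ 2) * (deriv h x) ^ 2 =
      (h x - H₀) ^ 2 * (c ^ 2 - g * h x - (h x * (h x + 2 * H₀) / H₀ ^ 3) * Einf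
        - ((h x) ^ 2 * (h x + H₀) ^ 2 / H₀ ^ 5) * (Finf / c)) :=
  first_integral_identity_general g H₀ c vs Einf Finf hH h hC2 hpos hode hlim hlim'
end

section
/- Suppose F∞ = 0 and let h be a profile of maximal height h_max > H₀ and speed c, and assume c·(c·H₀² − v♯∞·h_max²) > 0. Then h attains the value h_max at a unique point x_max ∈ ℝ, h is symmetric with respect to x_max (i.e. h(2·x_max − x) = h(x) for all x), and h is strictly decreasing on the half-line (x_max, ∞). -/
/-!
Writing the profile equation as the first-order system `(h, h')' = (h', G(h, h'))`, the
field `G` depends on `h'` only through `h'²`, so the equation is reversible: if `h'(a) = 0`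
then `x ↦ h(2a - x)` solves it with the same data at `a`, and uniqueness for the (locally
Lipschitz) system makes `h` symmetric about `a`. Two distinct critical points would make `h`
periodic, hence constant equal to its limit `H₀ < h_max`; so the maximum point is the only
critical point, and `h' < 0` on its right since `h` never exceeds `h_max`.
-/

open Filter Set Topology

theorem ODE_solution_unique_of_contDiffOn {E : Type*} [NormedAddCommGroup E] [NormedSpace ℝ E]
    {v : E → E} {U : Set E} (hU : IsOpen U) (hv : ContDiffOn ℝ 1 v U) {f g : ℝ → E} {t₀ : ℝ}
    (hf : ∀ t, HasDerivAt f (v (f t)) t) (hfU : ∀ t, f t ∈ U)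
    (hg : ∀ t, HasDerivAt g (v (g t)) t) (heq : f t₀ = g t₀) : f = g := by
  have hclosed : IsClosed {t | f t = g t} :=
    isClosed_eq (continuous_iff_continuousAt.2 fun t => (hf t).continuousAt)
      (continuous_iff_continuousAt.2 fun t => (hg t).continuousAt)
  have hopen : IsOpen {t | f t = g t} := by
    refine isOpen_iff_mem_nhds.2 fun t (ht : f t = g t) => ?_
    obtain ⟨K, s, hs, hlip⟩ := (hv.contDiffAt (hU.mem_nhds (hfU t))).exists_lipschitzOnWith
    have hfs : ∀ᶠ τ in 𝓝 t, f τ ∈ s := (hf t).continuousAt hs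
    have hgs : ∀ᶠ τ in 𝓝 t, g τ ∈ s := (hg t).continuousAt (ht ▸ hs)
    exact ODE_solution_unique_of_eventually (v := fun _ => v) (s := fun _ => s)
      (.of_forall fun _ => hlip) (hfs.mono fun τ hτ => ⟨hf τ, hτ⟩)
      (hgs.mono fun τ hτ => ⟨hg τ, hτ⟩) ht
  have := IsClopen.eq_univ ⟨hclosed, hopen⟩ ⟨t₀, heq⟩
  exact funext fun t => (this ▸ mem_univ t : t ∈ {t | f t = g t})

theorem symmetric_of_deriv_eq_zero_of_reversible {U : Set (ℝ × ℝ)} (hU : IsOpen U)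
    {G : ℝ × ℝ → ℝ} (hG : ContDiffOn ℝ 1 G U) (hG_even : ∀ p q, G (p, -q) = G (p, q))
    {h : ℝ → ℝ} (hh : ContDiff ℝ 2 h) (hU_mem : ∀ x, (h x, deriv h x) ∈ U)
    (hode : ∀ x, deriv (deriv h) x = G (h x, deriv h x)) {x₀ : ℝ} (hx₀ : deriv h x₀ = 0)
    (x : ℝ) : h (2 * x₀ - x) = h x := by
  have hd : Differentiable ℝ h := hh.differentiable two_ne_zero
  have hd' : Differentiable ℝ (deriv h) := (hh.iterate_deriv' 1 1).differentiable one_ne_zero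
  set v : ℝ × ℝ → ℝ × ℝ := fun p => (p.2, G p)
  have hv : ContDiffOn ℝ 1 v U := contDiffOn_snd.prodMk hG
  have hu : ∀ t, HasDerivAt (fun t => (h t, deriv h t)) (v (h t, deriv h t)) t := fun t => by
    simpa only [v, hode] using (hd t).hasDerivAt.prodMk (hd' t).hasDerivAt
  have hr : ∀ t, HasDerivAt (fun t => (h (2 * x₀ - t), -deriv h (2 * x₀ - t)))
      (v (h (2 * x₀ - t), -deriv h (2 * x₀ - t))) t := fun t => by
    have hσ : HasDerivAt (fun t : ℝ => 2 * x₀ - t) (-1) t := by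
      simpa using (hasDerivAt_id t).const_sub (2 * x₀)
    have := ((hd _).hasDerivAt.comp t hσ).prodMk ((hd' _).hasDerivAt.comp t hσ).neg
    simpa only [v, hG_even, hode, mul_neg_one, neg_neg, Function.comp_def, Pi.neg_apply] using this
  have := ODE_solution_unique_of_contDiffOn hU hv hu hU_mem hr (t₀ := x₀)
    (by rw [show 2 * x₀ - x₀ = x₀ by ring, hx₀, neg_zero])
  exact (congrArg Prod.fst (congrFun this x)).symm

theorem Function.Periodic.eq_of_tendsto_atTop {α : Type*} [TopologicalSpace α] [T2Space α]
    {f : ℝ → α} {T : ℝ} {L : α} (hf : Function.Periodic f T) (hT : T ≠ 0)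
    (hlim : Tendsto f atTop (𝓝 L)) (x : ℝ) : f x = L := by
  wlog hT_pos : 0 < T generalizing T
  · exact this hf.neg (neg_ne_zero.2 hT) (by linarith [hT.lt_or_gt.resolve_right hT_pos])
  have hseq : Tendsto (fun n : ℕ => x + n * T) atTop atTop :=
    tendsto_atTop_add_const_left _ x (tendsto_natCast_atTop_atTop.atTop_mul_const hT_pos)
  have hconst : f ∘ (fun n : ℕ => x + n * T) = fun _ => f x := funext fun n => hf.nat_mul n x
  exact tendsto_nhds_unique tendsto_const_nhds (hconst ▸ hlim.comp hseq)

theorem Function.periodic_of_reflection_symmetric {α : Type*} {f : ℝ → α} {a b : ℝ}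
    (ha : ∀ x, f (2 * a - x) = f x) (hb : ∀ x, f (2 * b - x) = f x) :
    Function.Periodic f (2 * (b - a)) := fun x => by
  rw [← hb, ← ha x]; ring_nf

theorem strictAntiOn_Ioi_of_forall_le_of_deriv_ne_zero {f : ℝ → ℝ} {a : ℝ} (hf : Differentiable ℝ f)
    (hmax : ∀ x, f x ≤ f a) (hcrit : ∀ x > a, deriv f x ≠ 0) : StrictAntiOn f (Ioi a) := by
  rcases hasDerivWithinAt_forall_lt_or_forall_gt_of_forall_ne (convex_Ioi a)
      (fun x _ => (hf x).hasDerivAt.hasDerivWithinAt) hcrit with hneg | hpos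
  · exact strictAntiOn_of_deriv_neg (convex_Ioi a) hf.continuous.continuousOn
      (by rwa [interior_Ioi])
  · have hmono : StrictMonoOn f (Ici a) := strictMonoOn_of_deriv_pos (convex_Ici a)
      hf.continuous.continuousOn (by rwa [interior_Ici])
    exact absurd (hmax (a + 1)) (not_le.2 (hmono self_mem_Ici (by simp) (by linarith)))

noncomputable section

def profileCoeff (H₀ c vs p : ℝ) : ℝ := (1/3) * c * (c * H₀ ^ 2 - vs * p ^ 2)

/-- The profile equation solved for `h''`, at `z = (h, h')`; it depends on `h'` only through
`h'²`. -/
def profileField (g H₀ c vs Einf Finf : ℝ) (z : ℝ × ℝ) : ℝ :=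
  (((z.1 - H₀) / (2 * z.1)) * (2 * c ^ 2 * H₀ - g * z.1 * (z.1 + H₀))
    - (z.1 ^ 3 / H₀ ^ 3 - 1) * Einf
    - 2 * (Finf / c) * ((z.1 ^ 2 - H₀ ^ 2) * z.1 ^ 3 / H₀ ^ 5)
    + (c ^ 2 / 3) * H₀ ^ 2 * z.2 ^ 2 / z.1) / profileCoeff H₀ c vs z.1

def profileRegion (H₀ c vs : ℝ) : Set (ℝ × ℝ) := {z | z.1 ≠ 0 ∧ profileCoeff H₀ c vs z.1 ≠ 0}

theorem isOpen_profileRegion (H₀ c vs : ℝ) : IsOpen (profileRegion H₀ c vs) :=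
  (isOpen_ne_fun continuous_fst continuous_const).inter
    (isOpen_ne_fun (by unfold profileCoeff; fun_prop) continuous_const)

theorem contDiffOn_profileField (g H₀ c vs Einf Finf : ℝ) {n : WithTop ℕ∞} :
    ContDiffOn ℝ n (profileField g H₀ c vs Einf Finf) (profileRegion H₀ c vs) := by
  intro z hz
  obtain ⟨hz₁, hz₂⟩ := hz
  unfold profileCoeff at hz₂
  apply ContDiffAt.contDiffWithinAt
  unfold profileField profileCoeff
  fun_prop (disch := simp [hz₁])

theorem profileField_neg_snd (g H₀ c vs Einf Finf p q : ℝ) :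
    profileField g H₀ c vs Einf Finf (p, -q) = profileField g H₀ c vs Einf Finf (p, q) := by
  simp only [profileField, neg_sq]

theorem profileCoeff_pos_of_le {H₀ c vs hmax a : ℝ} (hcrit : 0 < c * (c * H₀ ^ 2 - vs * hmax ^ 2))
    (ha : 0 < a) (hah : a ≤ hmax) : 0 < profileCoeff H₀ c vs a := by
  -- `c * (c * H₀ ^ 2 - vs * a ^ 2)` is affine in `a ^ 2`, nonnegative at `0`, positive at `hmax ^ 2`.
  have hsq : a ^ 2 ≤ hmax ^ 2 := pow_le_pow_left₀ ha.le hah 2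
  unfold profileCoeff
  rcases le_or_gt (c * vs) 0 with hcv | hcv
  · nlinarith [sq_nonneg (c * H₀), pow_pos ha 2]
  · nlinarith [mul_le_mul_of_nonneg_left hsq hcv.le]

end

theorem profile_symmetric_and_decreasing_general
    (g H₀ c vs Einf Finf hmax : ℝ) (hmax_gt : H₀ < hmax)
    (hcrit : 0 < c * (c * H₀ ^ 2 - vs * hmax ^ 2))
    (h : ℝ → ℝ) (hC2 : ContDiff ℝ 2 h) (hpos : ∀ x, 0 < h x)
    (hode : ∀ x, (1/3) * c * (c * H₀ ^ 2 - vs * (h x) ^ 2) * deriv (deriv h) x =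
      ((h x - H₀) / (2 * h x)) * (2 * c ^ 2 * H₀ - g * h x * (h x + H₀))
        - ((h x) ^ 3 / H₀ ^ 3 - 1) * Einf
        - 2 * (Finf / c) * (((h x) ^ 2 - H₀ ^ 2) * (h x) ^ 3 / H₀ ^ 5)
        + (c ^ 2 / 3) * H₀ ^ 2 * (deriv h x) ^ 2 / h x)
    (htop : Tendsto h atTop (nhds H₀))
    (hle : ∀ x, h x ≤ hmax) (hatt : ∃ x, h x = hmax) :
    ∃ xmax : ℝ, h xmax = hmax ∧ (∀ y, h y = hmax → y = xmax) ∧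
      (∀ x, h (2 * xmax - x) = h x) ∧ StrictAntiOn h (Set.Ioi xmax) := by
  obtain ⟨x₀, hx₀⟩ := hatt
  have hcoeff : ∀ x, 0 < profileCoeff H₀ c vs (h x) := fun x =>
    profileCoeff_pos_of_le hcrit (hpos x) (hle x)
  have hrefl : ∀ a, deriv h a = 0 → ∀ x, h (2 * a - x) = h x := fun a ha =>
    symmetric_of_deriv_eq_zero_of_reversible (isOpen_profileRegion H₀ c vs)
      (contDiffOn_profileField g H₀ c vs Einf Finf) (profileField_neg_snd g H₀ c vs Einf Finf)
      hC2 (fun x => ⟨(hpos x).ne', (hcoeff x).ne'⟩)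
      (fun x => (eq_div_iff (hcoeff x).ne').2 ((mul_comm _ _).trans (hode x))) ha
  have hcrit_unique : ∀ a b, deriv h a = 0 → deriv h b = 0 → a = b := by
    intro a b ha hb
    by_contra hab
    have hconst := (Function.periodic_of_reflection_symmetric (hrefl a ha) (hrefl b hb)
      ).eq_of_tendsto_atTop (by grind) htop x₀
    exact hmax_gt.ne (hconst ▸ hx₀)
  have hmax_crit : ∀ y, h y = hmax → deriv h y = 0 := fun y hy =>
    IsLocalMax.deriv_eq_zero (.of_forall fun z => hy ▸ hle z)
  have hx₀_crit := hmax_crit x₀ hx₀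
  refine ⟨x₀, hx₀, fun y hy => hcrit_unique _ _ (hmax_crit y hy) hx₀_crit, hrefl x₀ hx₀_crit, ?_⟩
  exact strictAntiOn_Ioi_of_forall_le_of_deriv_ne_zero (hC2.differentiable two_ne_zero) (fun x => hx₀ ▸ hle x)
    fun x hx hx' => hx.ne' (hcrit_unique _ _ hx' hx₀_crit)

/-- When `F∞ = 0` and `c·(c·H₀² − v♯∞·hmax²) > 0`, a solitary-wave
profile of maximal height `hmax` attains its maximum at a unique point `x_max`,
is symmetric with respect to `x_max` and strictly decreasing on `(x_max, ∞)`. -/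
theorem profile_symmetric_and_decreasing
    (g H₀ c vs Einf Finf hmax : ℝ) (hg : 0 < g) (hH : 0 < H₀) (hc : c ≠ 0)
    (hE : 0 < Einf) (hF : Finf = 0) (hmax_gt : H₀ < hmax)
    (hcrit : 0 < c * (c * H₀ ^ 2 - vs * hmax ^ 2))
    (h : ℝ → ℝ) (hC2 : ContDiff ℝ 2 h) (hpos : ∀ x, 0 < h x)
    (hode : ∀ x, (1/3) * c * (c * H₀ ^ 2 - vs * (h x) ^ 2) * deriv (deriv h) x =
      ((h x - H₀) / (2 * h x)) * (2 * c ^ 2 * H₀ - g * h x * (h x + H₀))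
        - ((h x) ^ 3 / H₀ ^ 3 - 1) * Einf
        - 2 * (Finf / c) * (((h x) ^ 2 - H₀ ^ 2) * (h x) ^ 3 / H₀ ^ 5)
        + (c ^ 2 / 3) * H₀ ^ 2 * (deriv h x) ^ 2 / h x)
    (htop : Tendsto h atTop (nhds H₀)) (hbot : Tendsto h atBot (nhds H₀))
    (htop' : Tendsto (deriv h) atTop (nhds 0))
    (hbot' : Tendsto (deriv h) atBot (nhds 0))
    (hle : ∀ x, h x ≤ hmax) (hatt : ∃ x, h x = hmax) :
    ∃ xmax : ℝ, h xmax = hmax ∧ (∀ y, h y = hmax → y = xmax) ∧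
      (∀ x, h (2 * xmax - x) = h x) ∧ StrictAntiOn h (Set.Ioi xmax) :=
  profile_symmetric_and_decreasing_general g H₀ c vs Einf Finf hmax hmax_gt hcrit h hC2 hpos hode
    htop hle hatt
end

section
/- Suppose F∞ = 0. Let h_max > H₀, set c̄ = √(g·h_max + h_max·(h_max + 2H₀)·E∞/H₀³), and let c = c̄ or c = −c̄. If c·(c·H₀² − v♯∞·h_max²) < 0, then there exists no profile of maximal height h_max and speed c; that is, no C² function h : ℝ → ℝ with h > 0, solving the profile ODE on ℝ, tending to H₀ with h' tending to 0 at ±∞, and with supremum h_max attained at some point. -/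
/-!
At a crest `x₀`, where `h x₀ = hmax`, we have `h' x₀ = 0` and `h'' x₀ ≤ 0`, so the left side of
the profile ODE is `≥ 0` because `c·(c·H₀² − v♯∞·hmax²) < 0`. For `c² = c̄²` the right side at
`(hmax, 0)` factors as `−(hmax − H₀)²·(g/2 + (hmax + H₀)·E∞/H₀³) < 0`.
-/

open Filter

/-- The right-hand side of the profile ODE at height `h` and slope `p = h'`. -/
noncomputable def profileRhs (g H₀ Einf c h p : ℝ) : ℝ :=
  ((h - H₀) / (2 * h)) * (2 * c ^ 2 * H₀ - g * h * (h + H₀))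
    - (h ^ 3 / H₀ ^ 3 - 1) * Einf + (c ^ 2 / 3) * H₀ ^ 2 * p ^ 2 / h

/-- No differentiability is needed: where `deriv` is undefined it takes the junk value `0`. -/
theorem IsLocalMax.deriv_deriv_nonpos {f : ℝ → ℝ} {x : ℝ} (hmax : IsLocalMax f x)
    (hf : ContinuousAt f x) : deriv (deriv f) x ≤ 0 := by
  by_contra! hpos
  -- A point that is both a local maximum and a local minimum has `f` locally constant.
  have hmin : IsLocalMin f x := isLocalMin_of_deriv_deriv_pos hpos hmax.deriv_eq_zero hf
  have hconst : f =ᶠ[nhds x] fun _ => f x := by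
    filter_upwards [hmax, hmin] with y hle hge using le_antisymm hle hge
  have hderiv : deriv f =ᶠ[nhds x] fun _ => 0 := by
    simpa using hconst.deriv
  simp [hderiv.deriv_eq] at hpos

theorem profileRhs_crest (g H₀ Einf c hmax : ℝ) (hH : H₀ ≠ 0) (hmax_ne : hmax ≠ 0)
    (hc2 : c ^ 2 = g * hmax + hmax * (hmax + 2 * H₀) * Einf / H₀ ^ 3) :
    profileRhs g H₀ Einf c hmax 0
      = -(hmax - H₀) ^ 2 * (g / 2 + (hmax + H₀) * Einf / H₀ ^ 3) := by
  rw [profileRhs, hc2]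
  field_simp
  ring

theorem profileRhs_crest_neg (g H₀ Einf c hmax : ℝ) (hg : 0 ≤ g) (hH : 0 < H₀) (hE : 0 < Einf)
    (hmax_gt : H₀ < hmax)
    (hc2 : c ^ 2 = g * hmax + hmax * (hmax + 2 * H₀) * Einf / H₀ ^ 3) :
    profileRhs g H₀ Einf c hmax 0 < 0 := by
  rw [profileRhs_crest g H₀ Einf c hmax hH.ne' (by linarith) hc2, neg_mul, neg_lt_zero]
  have hsum : 0 < hmax + H₀ := by linarith
  exact mul_pos (pow_pos (sub_pos.mpr hmax_gt) 2) (by positivity)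

/-- Nonexistence of a solitary wave of maximal height `hmax` and
speed `c = ±c̄` when `c·(c·H₀² − v♯∞·hmax²) < 0` (case `F∞ = 0`). -/
theorem nonexistence_of_solitary_wave
    (g H₀ vs Einf hmax c : ℝ) (hg : 0 < g) (hH : 0 < H₀) (hE : 0 < Einf)
    (hmax_gt : H₀ < hmax)
    (hc : c = Real.sqrt (g * hmax + hmax * (hmax + 2 * H₀) * Einf / H₀ ^ 3) ∨
          c = -Real.sqrt (g * hmax + hmax * (hmax + 2 * H₀) * Einf / H₀ ^ 3))
    (hcrit : c * (c * H₀ ^ 2 - vs * hmax ^ 2) < 0) :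
    ¬ ∃ h : ℝ → ℝ, ContDiff ℝ 2 h ∧ (∀ x, 0 < h x) ∧
      (∀ x, (1/3) * c * (c * H₀ ^ 2 - vs * (h x) ^ 2) * deriv (deriv h) x =
        ((h x - H₀) / (2 * h x)) * (2 * c ^ 2 * H₀ - g * h x * (h x + H₀))
          - ((h x) ^ 3 / H₀ ^ 3 - 1) * Einf
          + (c ^ 2 / 3) * H₀ ^ 2 * (deriv h x) ^ 2 / h x) ∧
      Tendsto h atTop (nhds H₀) ∧ Tendsto h atBot (nhds H₀) ∧
      Tendsto (deriv h) atTop (nhds 0) ∧ Tendsto (deriv h) atBot (nhds 0) ∧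
      (∀ x, h x ≤ hmax) ∧ (∃ x, h x = hmax) := by
  rintro ⟨h, hC2, -, hode, -, -, -, -, hle, x₀, hx₀⟩
  have hc2 : c ^ 2 = g * hmax + hmax * (hmax + 2 * H₀) * Einf / H₀ ^ 3 := by
    have : 0 ≤ g * hmax + hmax * (hmax + 2 * H₀) * Einf / H₀ ^ 3 := by
      have := hH.trans hmax_gt
      positivity
    rcases hc with rfl | rfl <;> simp [Real.sq_sqrt this]
  have hcrest : IsLocalMax h x₀ := Eventually.of_forall fun y => hx₀ ▸ hle y
  have hd2 : deriv (deriv h) x₀ ≤ 0 := hcrest.deriv_deriv_nonpos hC2.continuous.continuousAt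
  have hode₀ : (1/3) * c * (c * H₀ ^ 2 - vs * hmax ^ 2) * deriv (deriv h) x₀
      = profileRhs g H₀ Einf c hmax 0 := by
    have := hode x₀
    rwa [hx₀, hcrest.deriv_eq_zero] at this
  have hrhs := profileRhs_crest_neg g H₀ Einf c hmax hg.le hH hE hmax_gt hc2
  nlinarith [mul_nonneg (neg_nonneg.mpr hcrit.le) (neg_nonneg.mpr hd2)]
end

section
/- Suppose F∞ = 0. Let h_max > H₀, set c̄ = √(g·h_max + h_max·(h_max + 2H₀)·E∞/H₀³), and let c = c̄ or c = −c̄. In the critical case c·H₀² − v♯∞·h_max² = 0, there exists no profile of maximal height h_max and speed c; that is, no C² function h : ℝ → ℝ with h > 0, solving the profile ODE on ℝ, tending to H₀ with h' tending to 0 at ±∞, and with supremum h_max attained at some point. -/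
open Filter

/-- Nonexistence of a smooth solitary wave of maximal height `hmax`
and speed `c = ±c̄` in the critical case `c·H₀² − v♯∞·hmax² = 0` (case `F∞ = 0`). -/
theorem nonexistence_critical_case
    (g H₀ vs Einf hmax c : ℝ) (hg : 0 < g) (hH : 0 < H₀) (hE : 0 < Einf)
    (hmax_gt : H₀ < hmax)
    (hc : c = Real.sqrt (g * hmax + hmax * (hmax + 2 * H₀) * Einf / H₀ ^ 3) ∨
          c = -Real.sqrt (g * hmax + hmax * (hmax + 2 * H₀) * Einf / H₀ ^ 3))
    (hcrit : c * H₀ ^ 2 - vs * hmax ^ 2 = 0) :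
    ¬ ∃ h : ℝ → ℝ, ContDiff ℝ 2 h ∧ (∀ x, 0 < h x) ∧
      (∀ x, (1/3) * c * (c * H₀ ^ 2 - vs * (h x) ^ 2) * deriv (deriv h) x =
        ((h x - H₀) / (2 * h x)) * (2 * c ^ 2 * H₀ - g * h x * (h x + H₀))
          - ((h x) ^ 3 / H₀ ^ 3 - 1) * Einf
          + (c ^ 2 / 3) * H₀ ^ 2 * (deriv h x) ^ 2 / h x) ∧
      Tendsto h atTop (nhds H₀) ∧ Tendsto h atBot (nhds H₀) ∧
      Tendsto (deriv h) atTop (nhds 0) ∧ Tendsto (deriv h) atBot (nhds 0) ∧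
      (∀ x, h x ≤ hmax) ∧ (∃ x, h x = hmax) := by
  rintro ⟨h, hC2, hpos, hode, -, -, -, -, hle, x₀, hx₀⟩
  have hmpos : 0 < hmax := lt_trans hH hmax_gt
  have hH0 : H₀ ≠ 0 := ne_of_gt hH
  -- c² = g·hmax + hmax·(hmax+2H₀)·Einf/H₀³
  have harg : 0 ≤ g * hmax + hmax * (hmax + 2 * H₀) * Einf / H₀ ^ 3 := by positivity
  have hc2 : c ^ 2 = g * hmax + hmax * (hmax + 2 * H₀) * Einf / H₀ ^ 3 := by
    rcases hc with rfl | rfl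
    · exact Real.sq_sqrt harg
    · rw [neg_pow, Real.sq_sqrt harg]; ring
  -- derivative vanishes at the max
  have hdiff : Differentiable ℝ h := hC2.differentiable (by norm_num)
  have hmax_loc : IsLocalMax h x₀ := by
    apply Filter.Eventually.of_forall
    intro x; rw [hx₀]; exact hle x
  have hd0 : deriv h x₀ = 0 := hmax_loc.deriv_eq_zero
  -- ODE at x₀
  have := hode x₀
  rw [hx₀, hd0, hcrit] at this
  have h0 : (0 : ℝ) =
      ((hmax - H₀) / (2 * hmax)) * (2 * c ^ 2 * H₀ - g * hmax * (hmax + H₀))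
        - (hmax ^ 3 / H₀ ^ 3 - 1) * Einf := by
    have := this
    simp at this
    linarith [this]
  rw [hc2] at h0
  have key : 0 = -(g * (hmax - H₀) ^ 2) / 2
      - (hmax - H₀) ^ 2 * (hmax + H₀) * Einf / H₀ ^ 3 := by
    rw [h0]; field_simp; ring
  have hpos2 : 0 < (hmax - H₀) ^ 2 := pow_pos (by linarith) 2
  have hB : 0 < (hmax - H₀) ^ 2 * (hmax + H₀) * Einf / H₀ ^ 3 :=
    div_pos (mul_pos (mul_pos hpos2 (by linarith)) hE) (pow_pos hH 3)
  have hA : 0 < g * (hmax - H₀) ^ 2 := mul_pos hg hpos2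
  linarith
end

section
/- Let g > 0, H₀ > 0, h_max > H₀, and for E ≥ 0 set c̄(E)² = g·h_max + h_max·(h_max + 2H₀)·E/H₀³. Then for every fixed h with H₀ < h < h_max, the map E ↦ (c̄(E)² − g·h − (h·(h + 2H₀)/H₀³)·E) / c̄(E)² is strictly increasing on [0, ∞). (Consequently the squared slope (h')² of the solitary-wave profile at a given height h increases with E∞, so the solitary wave becomes narrower as E∞ increases.) -/
/-- For a fixed height `H₀ < h < hmax`, the normalized squared
slope of the solitary-wave profile at height `h` is strictly increasing in
`E∞`; the solitary wave becomes narrower as `E∞` increases. -/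
theorem squared_slope_increasing_in_E
    (g H₀ hmax h : ℝ) (hg : 0 < g) (hH : 0 < H₀) (hmax_gt : H₀ < hmax)
    (hh₁ : H₀ < h) (hh₂ : h < hmax) :
    StrictMonoOn
      (fun E : ℝ =>
        ((g * hmax + hmax * (hmax + 2 * H₀) * E / H₀ ^ 3) - g * h
            - (h * (h + 2 * H₀) / H₀ ^ 3) * E)
          / (g * hmax + hmax * (hmax + 2 * H₀) * E / H₀ ^ 3))
      (Set.Ici 0) := by
  intro a ha b hb hab
  simp only [Set.mem_Ici] at ha hb
  have hH3 : (0:ℝ) < H₀ ^ 3 := by positivity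
  have hmaxpos : 0 < hmax := lt_trans hH hmax_gt
  have hDa : 0 < g * hmax + hmax * (hmax + 2 * H₀) * a / H₀ ^ 3 := by positivity
  have hDb : 0 < g * hmax + hmax * (hmax + 2 * H₀) * b / H₀ ^ 3 := by positivity
  simp only
  rw [div_lt_div_iff₀ hDa hDb]
  have hne : H₀ ^ 3 ≠ 0 := ne_of_gt hH3
  have key : h * (h + 2 * H₀) * (g * hmax) < hmax * (hmax + 2 * H₀) * (g * h) := by
    nlinarith [mul_pos hg (mul_pos (lt_trans hH hh₁) hmaxpos)]
  rw [← sub_pos]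
  have expand :
      (g * hmax + hmax * (hmax + 2 * H₀) * b / H₀ ^ 3 - g * h - h * (h + 2 * H₀) / H₀ ^ 3 * b) *
        (g * hmax + hmax * (hmax + 2 * H₀) * a / H₀ ^ 3)
      - (g * hmax + hmax * (hmax + 2 * H₀) * a / H₀ ^ 3 - g * h - h * (h + 2 * H₀) / H₀ ^ 3 * a) *
        (g * hmax + hmax * (hmax + 2 * H₀) * b / H₀ ^ 3)
      = (b - a) * (hmax * (hmax + 2 * H₀) * (g * h) - h * (h + 2 * H₀) * (g * hmax)) / H₀ ^ 3 := by
    field_simp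
    ring
  rw [expand]
  exact div_pos (mul_pos (sub_pos.mpr hab) (sub_pos.mpr key)) hH3
end

section
/- Let g > 0, H₀ > 0, E∞ > 0, ε > 0, set h_max = H₀·(1 + ε), p = −(g·h_max + h_max·(h_max + 2H₀)·E∞/H₀³) and q = −h_max²·(h_max + H₀)²·F∞/H₀⁵. If F∞² < (4/27)·(H₀⁵/((1+ε)·(2+ε)⁴))·(g + (3+ε)·E∞/H₀²)³, then the discriminant Δ = −(4p³ + 27q²) of the cubic X³ + p·X + q is strictly positive, and hence the cubic has three distinct real roots. -/
/-- A depressed cubic with positive discriminant has three distinct real roots. -/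
lemma cubic_three_distinct_roots (p q : ℝ) (hΔ : 0 < -(4 * p ^ 3 + 27 * q ^ 2)) :
    ∃ x y z : ℝ, x ≠ y ∧ x ≠ z ∧ y ≠ z ∧
      x ^ 3 + p * x + q = 0 ∧ y ^ 3 + p * y + q = 0 ∧ z ^ 3 + p * z + q = 0 := by
  have hp : p < 0 := by
    by_contra h'
    push_neg at h'
    nlinarith [sq_nonneg q, pow_nonneg h' 3]
  set m := Real.sqrt (-p / 3) with hm
  have hm2 : m ^ 2 = -p / 3 := Real.sq_sqrt (by linarith)
  have hm0 : 0 < m := Real.sqrt_pos.mpr (by linarith)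
  have hpm : p = -3 * m ^ 2 := by linarith
  have hm3 : (m ^ 3) ^ 2 = -p ^ 3 / 27 := by
    have : (m ^ 3) ^ 2 = (m ^ 2) ^ 3 := by ring
    rw [this, hm2]; ring
  have hq2 : q ^ 2 < 4 * (m ^ 3) ^ 2 := by rw [hm3]; linarith
  have hm3pos : 0 < m ^ 3 := by positivity
  have h1 : 0 < q + 2 * m ^ 3 := by nlinarith
  have h2 : q - 2 * m ^ 3 < 0 := by nlinarith
  set f : ℝ → ℝ := fun x => x ^ 3 + p * x + q with hf
  have hfc : Continuous f := by fun_prop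
  have hfm : f m = q - 2 * m ^ 3 := by simp only [hf, hpm]; ring
  have hfnm : f (-m) = q + 2 * m ^ 3 := by simp only [hf, hpm]; ring
  set t : ℝ := 2 * m + |q| + 1 with ht
  have hqabs : 0 ≤ |q| := abs_nonneg q
  have hqle : q ≤ |q| := le_abs_self q
  have hqge : -|q| ≤ q := neg_abs_le q
  have hft : 0 < f t := by
    simp only [hf, hpm, ht]
    nlinarith [sq_nonneg m, mul_pos hm0 hm0, mul_nonneg hqabs hqabs,
      mul_nonneg (mul_nonneg hqabs hqabs) hqabs, mul_nonneg hm0.le hqabs,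
      mul_nonneg (mul_nonneg hm0.le hm0.le) hqabs, mul_nonneg hm0.le (mul_nonneg hqabs hqabs)]
  have hfnt : f (-t) < 0 := by
    simp only [hf, hpm, ht]
    nlinarith [sq_nonneg m, mul_pos hm0 hm0, mul_nonneg hqabs hqabs,
      mul_nonneg (mul_nonneg hqabs hqabs) hqabs, mul_nonneg hm0.le hqabs,
      mul_nonneg (mul_nonneg hm0.le hm0.le) hqabs, mul_nonneg hm0.le (mul_nonneg hqabs hqabs)]
  have hmt : m ≤ t := by simp only [ht]; linarith
  have hx : ∃ x ∈ Set.Icc (-t) (-m), f x = 0 := by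
    have h := intermediate_value_Icc (by linarith : -t ≤ -m) hfc.continuousOn
    have : (0 : ℝ) ∈ Set.Icc (f (-t)) (f (-m)) := by
      rw [hfnm]; constructor <;> linarith
    obtain ⟨x, hx1, hx2⟩ := h this
    exact ⟨x, hx1, hx2⟩
  have hy : ∃ y ∈ Set.Icc (-m) m, f y = 0 := by
    have h := intermediate_value_Icc' (by linarith : -m ≤ m) hfc.continuousOn
    have : (0 : ℝ) ∈ Set.Icc (f m) (f (-m)) := by
      rw [hfm, hfnm]; constructor <;> linarith
    obtain ⟨y, hy1, hy2⟩ := h this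
    exact ⟨y, hy1, hy2⟩
  have hz : ∃ z ∈ Set.Icc m t, f z = 0 := by
    have h := intermediate_value_Icc hmt hfc.continuousOn
    have : (0 : ℝ) ∈ Set.Icc (f m) (f t) := by
      rw [hfm]; constructor <;> linarith
    obtain ⟨z, hz1, hz2⟩ := h this
    exact ⟨z, hz1, hz2⟩
  obtain ⟨x, ⟨hx1, hx2⟩, hxr⟩ := hx
  obtain ⟨y, ⟨hy1, hy2⟩, hyr⟩ := hy
  obtain ⟨z, ⟨hz1, hz2⟩, hzr⟩ := hz
  have hxm : x < -m := lt_of_le_of_ne hx2 (fun h => by rw [h] at hxr; rw [hfnm] at hxr; linarith)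
  have hym : -m < y := lt_of_le_of_ne hy1 (fun h => by rw [← h] at hyr; rw [hfnm] at hyr; linarith)
  have hym2 : y < m := lt_of_le_of_ne hy2 (fun h => by rw [h] at hyr; rw [hfm] at hyr; linarith)
  have hzm : m < z := lt_of_le_of_ne hz1 (fun h => by rw [← h] at hzr; rw [hfm] at hzr; linarith)
  exact ⟨x, y, z, by linarith, by linarith, by linarith, hxr, hyr, hzr⟩

/-- Under the smallness condition on `F∞`, the discriminant
`Δ = −(4p³ + 27q²)` of the cubic giving the possible solitary-wave speeds is
strictly positive, and the cubic has three distinct real roots. -/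
theorem discriminant_positive_three_roots
    (g H₀ Einf Finf ε hmax p q : ℝ) (hg : 0 < g) (hH : 0 < H₀) (hE : 0 < Einf)
    (hε : 0 < ε) (hhmax : hmax = H₀ * (1 + ε))
    (hp : p = -(g * hmax + hmax * (hmax + 2 * H₀) * Einf / H₀ ^ 3))
    (hq : q = -(hmax ^ 2 * (hmax + H₀) ^ 2 * Finf / H₀ ^ 5))
    (hcond : Finf ^ 2 < (4 / 27) * (H₀ ^ 5 / ((1 + ε) * (2 + ε) ^ 4))
      * (g + (3 + ε) * Einf / H₀ ^ 2) ^ 3) :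
    0 < -(4 * p ^ 3 + 27 * q ^ 2) ∧
    ∃ x y z : ℝ, x ≠ y ∧ x ≠ z ∧ y ≠ z ∧
      x ^ 3 + p * x + q = 0 ∧ y ^ 3 + p * y + q = 0 ∧ z ^ 3 + p * z + q = 0 := by
  have hH' : H₀ ≠ 0 := ne_of_gt hH
  set A : ℝ := g + (3 + ε) * Einf / H₀ ^ 2 with hA
  have hApos : 0 < A := by positivity
  have hpval : p = -(H₀ * (1 + ε) * A) := by
    rw [hp, hhmax, hA]; field_simp; ring
  have hqsq : q ^ 2 = (1 + ε) ^ 4 * (2 + ε) ^ 4 * Finf ^ 2 / H₀ ^ 2 := by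
    rw [hq, hhmax]; field_simp; ring
  have hc : (0 : ℝ) < 27 * (1 + ε) ^ 4 * (2 + ε) ^ 4 / H₀ ^ 2 := by positivity
  have key := mul_lt_mul_of_pos_left hcond hc
  have hrhs : 27 * (1 + ε) ^ 4 * (2 + ε) ^ 4 / H₀ ^ 2 *
      ((4 / 27) * (H₀ ^ 5 / ((1 + ε) * (2 + ε) ^ 4)) * A ^ 3)
      = 4 * (H₀ * (1 + ε) * A) ^ 3 := by
    field_simp
  have hΔ : 0 < -(4 * p ^ 3 + 27 * q ^ 2) := by
    rw [hpval, hqsq]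
    rw [hrhs] at key
    have : 27 * (1 + ε) ^ 4 * (2 + ε) ^ 4 / H₀ ^ 2 * Finf ^ 2
        = 27 * ((1 + ε) ^ 4 * (2 + ε) ^ 4 * Finf ^ 2 / H₀ ^ 2) := by ring
    rw [this] at key
    nlinarith [key]
  exact ⟨hΔ, cubic_three_distinct_roots p q hΔ⟩
end

section
/- Let h be a profile of maximal height h_max > H₀ and speed c ≠ 0 (with general parameters E∞, v♯∞, F∞), and assume c·(c·H₀² − v♯∞·s²) > 0 for every s ∈ [H₀, h_max]. Then for every s ∈ [H₀, h_max] one has c² − g·s − (s·(s + 2H₀)/H₀³)·E∞ − (s²·(s + H₀)²/H₀⁵)·(F∞/c) ≥ 0. (This is the necessary positivity condition φ_c ≥ 0 of Proposition 2.) -/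
/-!
Multiplying the profile equation by `h'` and integrating gives a first integral
`(a(h) h'² - (h - H₀)² φ_c(h)) / h²`, where `a(s) = c (c H₀² - v♯∞ s²) / 3`. It vanishes at `+∞`,
hence everywhere, so `a(h) h'² = (h - H₀)² φ_c(h)`. Every level `s ∈ (H₀, h_max]` is crossed by the
profile, and `a(s) > 0` there forces `φ_c(s) ≥ 0`; the endpoint `s = H₀` follows by continuity.
-/

open Filter Topology

/-- The function `φ_c` of the positivity condition. -/
noncomputable def positivityPhi (g H₀ c E F s : ℝ) : ℝ :=
  c ^ 2 - g * s - (s * (s + 2 * H₀) / H₀ ^ 3) * E - (s ^ 2 * (s + H₀) ^ 2 / H₀ ^ 5) * (F / c)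

theorem continuous_positivityPhi (g H₀ c E F : ℝ) : Continuous (positivityPhi g H₀ c E F) := by
  unfold positivityPhi
  fun_prop

theorem hasDerivAt_positivityPhi (g H₀ c E F s : ℝ) :
    HasDerivAt (positivityPhi g H₀ c E F)
      (-g - (2 * (s + H₀) / H₀ ^ 3) * E - (2 * s * (s + H₀) * (2 * s + H₀) / H₀ ^ 5) * (F / c)) s := by
  have hs : HasDerivAt (fun s : ℝ => s) 1 s := hasDerivAt_id s
  have := (((hs.const_mul g).const_sub (c ^ 2)).fun_sub
      (((hs.fun_mul (hs.add_const (2 * H₀))).div_const (H₀ ^ 3)).mul_const E)).fun_sub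
      ((((hs.fun_pow 2).fun_mul ((hs.add_const H₀).fun_pow 2)).div_const (H₀ ^ 5)).mul_const (F / c))
  refine this.congr_deriv ?_
  push_cast
  ring

/-- With `u = h'`, the bracket in the derivative vanishes exactly along solutions of the
autonomous equation `2 h a(h) h'' = (2 a(h) - h a'(h)) h'² + h Q'(h) - 2 Q(h)`. -/
theorem hasDerivAt_energy_s15 {a Q h u : ℝ → ℝ} {x a₁ q₁ u₁ : ℝ} (ha : HasDerivAt a a₁ (h x))
    (hQ : HasDerivAt Q q₁ (h x)) (hh : HasDerivAt h (u x) x) (hu : HasDerivAt u u₁ x)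
    (hx : h x ≠ 0) :
    HasDerivAt (fun t => (a (h t) * u t ^ 2 - Q (h t)) / h t ^ 2)
      (u x * (2 * h x * a (h x) * u₁ + (h x * a₁ - 2 * a (h x)) * u x ^ 2 - h x * q₁
        + 2 * Q (h x)) / h x ^ 3) x := by
  have := (((ha.comp x hh).fun_mul (hu.fun_pow 2)).fun_sub (hQ.comp x hh)).fun_div (hh.fun_pow 2)
    (pow_ne_zero 2 hx)
  refine this.congr_deriv ?_
  simp only [Function.comp_apply]
  field_simp
  ring

theorem eq_of_hasDerivAt_zero_of_tendsto_atTop {f : ℝ → ℝ} {l : ℝ} (hf : ∀ x, HasDerivAt f 0 x)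
    (hl : Tendsto f atTop (𝓝 l)) (x : ℝ) : f x = l :=
  tendsto_nhds_unique (tendsto_const_nhds.congr fun y =>
    is_const_of_deriv_eq_zero (fun z => (hf z).differentiableAt) (fun z => (hf z).deriv) x y) hl

section Profile

variable {g H₀ c vs E F : ℝ}

/-- The first integral of the profile equation, evaluated at `h = y`, `h' = u`. -/
noncomputable def profileEnergy (g H₀ c vs E F y u : ℝ) : ℝ :=
  ((1 / 3) * c * (c * H₀ ^ 2 - vs * y ^ 2) * u ^ 2 - (y - H₀) ^ 2 * positivityPhi g H₀ c E F y)
    / y ^ 2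

theorem hasDerivAt_profileEnergy_comp {h u : ℝ → ℝ} {x u₁ : ℝ} (hH : H₀ ≠ 0)
    (hh : HasDerivAt h (u x) x) (hu : HasDerivAt u u₁ x) (hx : h x ≠ 0)
    (hode : (1/3) * c * (c * H₀ ^ 2 - vs * (h x) ^ 2) * u₁ =
      ((h x - H₀) / (2 * h x)) * (2 * c ^ 2 * H₀ - g * h x * (h x + H₀))
        - ((h x) ^ 3 / H₀ ^ 3 - 1) * E
        - 2 * (F / c) * (((h x) ^ 2 - H₀ ^ 2) * (h x) ^ 3 / H₀ ^ 5)
        + (c ^ 2 / 3) * H₀ ^ 2 * (u x) ^ 2 / h x) :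
    HasDerivAt (fun t => profileEnergy g H₀ c vs E F (h t) (u t)) 0 x := by
  have ha : HasDerivAt (fun y => (1 / 3) * c * (c * H₀ ^ 2 - vs * y ^ 2))
      (-(2 / 3) * c * vs * h x) (h x) :=
    (((((hasDerivAt_id' (h x)).fun_pow 2).const_mul vs).const_sub (c * H₀ ^ 2)).const_mul
      ((1 / 3) * c)).congr_deriv (by push_cast; ring)
  have hQ := (((hasDerivAt_id' (h x)).sub_const H₀).fun_pow 2).fun_mul
    (hasDerivAt_positivityPhi g H₀ c E F (h x))
  refine (hasDerivAt_energy_s15 ha hQ hh hu hx).congr_deriv ?_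
  unfold positivityPhi
  field_simp at hode ⊢
  linear_combination u x * hode

theorem tendsto_profileEnergy_comp {h u : ℝ → ℝ} {l : Filter ℝ} (hH : H₀ ≠ 0)
    (hh : Tendsto h l (𝓝 H₀)) (hu : Tendsto u l (𝓝 0)) :
    Tendsto (fun t => profileEnergy g H₀ c vs E F (h t) (u t)) l (𝓝 0) := by
  have hcont : ContinuousAt (fun p : ℝ × ℝ => profileEnergy g H₀ c vs E F p.1 p.2) (H₀, 0) := by
    unfold profileEnergy positivityPhi
    fun_prop (disch := exact pow_ne_zero 2 hH)
  simpa [profileEnergy, Function.comp_def] using hcont.tendsto.comp (hh.prodMk_nhds hu)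

theorem positivityPhi_nonneg_of_profileEnergy_eq_zero {y u : ℝ}
    (hcrit : 0 < c * (c * H₀ ^ 2 - vs * y ^ 2)) (hyH : y ≠ H₀) (hy : y ≠ 0)
    (hE : profileEnergy g H₀ c vs E F y u = 0) : 0 ≤ positivityPhi g H₀ c E F y := by
  rw [profileEnergy, div_eq_zero_iff, sub_eq_zero] at hE
  have hsq : 0 < (y - H₀) ^ 2 := by positivity [sub_ne_zero.mpr hyH]
  refine nonneg_of_mul_nonneg_right ?_ hsq
  rw [← hE.resolve_right (pow_ne_zero 2 hy)]
  have := mul_nonneg hcrit.le (sq_nonneg u)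
  linarith

end Profile

theorem necessary_positivity_condition_general
    (g H₀ c vs Einf Finf hmax : ℝ) (hH : 0 < H₀)
    (hmax_gt : H₀ < hmax)
    (h : ℝ → ℝ) (hC2 : ContDiff ℝ 2 h) (hpos : ∀ x, 0 < h x)
    (hode : ∀ x, (1/3) * c * (c * H₀ ^ 2 - vs * (h x) ^ 2) * deriv (deriv h) x =
      ((h x - H₀) / (2 * h x)) * (2 * c ^ 2 * H₀ - g * h x * (h x + H₀))
        - ((h x) ^ 3 / H₀ ^ 3 - 1) * Einf
        - 2 * (Finf / c) * (((h x) ^ 2 - H₀ ^ 2) * (h x) ^ 3 / H₀ ^ 5)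
        + (c ^ 2 / 3) * H₀ ^ 2 * (deriv h x) ^ 2 / h x)
    (htop : Tendsto h atTop (nhds H₀))
    (htop' : Tendsto (deriv h) atTop (nhds 0))
    (hatt : ∃ x, h x = hmax)
    (hcrit : ∀ s ∈ Set.Icc H₀ hmax, 0 < c * (c * H₀ ^ 2 - vs * s ^ 2)) :
    ∀ s ∈ Set.Icc H₀ hmax,
      0 ≤ c ^ 2 - g * s - (s * (s + 2 * H₀) / H₀ ^ 3) * Einf
        - (s ^ 2 * (s + H₀) ^ 2 / H₀ ^ 5) * (Finf / c) := by
  obtain ⟨xmax, hxmax⟩ := hatt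
  have hdh := hC2.differentiable (by norm_num)
  have hdh' := hC2.differentiable_deriv_two
  have henergy (x : ℝ) : profileEnergy g H₀ c vs Einf Finf (h x) (deriv h x) = 0 :=
    eq_of_hasDerivAt_zero_of_tendsto_atTop
      (fun x => hasDerivAt_profileEnergy_comp hH.ne' (hdh x).hasDerivAt (hdh' x).hasDerivAt
        (hpos x).ne' (hode x))
      (tendsto_profileEnergy_comp hH.ne' htop htop') x
  have hIoc : Set.Ioc H₀ hmax ⊆ {s | 0 ≤ positivityPhi g H₀ c Einf Finf s} := by
    rintro s ⟨hHs, hs⟩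
    obtain ⟨x, rfl⟩ := mem_range_of_exists_le_of_exists_ge hdh.continuous
      ((htop.eventually_lt_const hHs).exists.imp fun _ => le_of_lt)
      ⟨xmax, hs.trans hxmax.ge⟩
    exact positivityPhi_nonneg_of_profileEnergy_eq_zero (hcrit _ ⟨hHs.le, hs⟩) hHs.ne'
      (hpos x).ne' (henergy x)
  rw [← closure_Ioc hmax_gt.ne]
  exact closure_minimal hIoc (isClosed_le continuous_const (continuous_positivityPhi ..))

/-- Necessary positivity condition `φ_c ≥ 0` on `[H₀, hmax]` for
the existence of a solitary wave with general parameters `E∞, v♯∞, F∞`. -/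
theorem necessary_positivity_condition
    (g H₀ c vs Einf Finf hmax : ℝ) (hg : 0 < g) (hH : 0 < H₀) (hc : c ≠ 0)
    (hmax_gt : H₀ < hmax)
    (h : ℝ → ℝ) (hC2 : ContDiff ℝ 2 h) (hpos : ∀ x, 0 < h x)
    (hode : ∀ x, (1/3) * c * (c * H₀ ^ 2 - vs * (h x) ^ 2) * deriv (deriv h) x =
      ((h x - H₀) / (2 * h x)) * (2 * c ^ 2 * H₀ - g * h x * (h x + H₀))
        - ((h x) ^ 3 / H₀ ^ 3 - 1) * Einf
        - 2 * (Finf / c) * (((h x) ^ 2 - H₀ ^ 2) * (h x) ^ 3 / H₀ ^ 5)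
        + (c ^ 2 / 3) * H₀ ^ 2 * (deriv h x) ^ 2 / h x)
    (htop : Tendsto h atTop (nhds H₀)) (hbot : Tendsto h atBot (nhds H₀))
    (htop' : Tendsto (deriv h) atTop (nhds 0))
    (hbot' : Tendsto (deriv h) atBot (nhds 0))
    (hle : ∀ x, h x ≤ hmax) (hatt : ∃ x, h x = hmax)
    (hcrit : ∀ s ∈ Set.Icc H₀ hmax, 0 < c * (c * H₀ ^ 2 - vs * s ^ 2)) :
    ∀ s ∈ Set.Icc H₀ hmax,
      0 ≤ c ^ 2 - g * s - (s * (s + 2 * H₀) / H₀ ^ 3) * Einf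
        - (s ^ 2 * (s + H₀) ^ 2 / H₀ ^ 5) * (Finf / c) :=
  necessary_positivity_condition_general g H₀ c vs Einf Finf hmax hH hmax_gt h hC2 hpos hode htop
    htop' hatt hcrit
end

section
/- Let g > 0, H₀ > 0, E∞ > 0, v♯∞ > 0, and let h_crit > H₀ and c̄ > 0 satisfy c̄² = g·h_crit + h_crit·(h_crit + 2H₀)·E∞/H₀³ and c̄·H₀² = v♯∞·h_crit². Then there exists a unique C¹ function h : [0, ∞) → ℝ with h(0) = h_crit satisfying for all x ≥ 0 the first-order ODE h'(x) = −( (3·E∞/(c̄·H₀³·v♯∞)) · (h(x) − H₀)² · (h(x) + ((v♯∞)²/E∞)·(h_crit³/H₀)) / (h(x) + h_crit) )^{1/2}; moreover H₀ < h(x) ≤ h_crit for all x ≥ 0, h is strictly decreasing, and h(x) → H₀ as x → +∞. The even extension of h to ℝ is the profile of the peaked solitary wave of critical maximal amplitude h_crit and speed c̄. -/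
/-!
Separation of variables. Above the equilibrium `H₀` the equation `h' = -F h` is solved by
inverting the descent time `T y = ∫ t in y..B, (F t)⁻¹`. Since `F y ≤ M (y - H₀)`, `T` diverges
logarithmically both as `y → H₀⁺` and as `y → ∞`, so `T` is a decreasing bijection from `(H₀, ∞)`
onto `ℝ`, and its inverse is a global solution that tends to `H₀` without reaching it.
Uniqueness needs no Lipschitz bound: any solution starting at `B` satisfies `T (h x) = x` for as
long as it stays above `H₀`, so by continuity it can never reach `H₀`.
-/

open Filter Set Topology

namespace PeakedWave

variable {F f g : ℝ → ℝ} {H₀ B M : ℝ}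

/-- A solution of `h' = -F h` with `h 0 = B` reaches the level `y` at time `descentTime F B y`. -/
noncomputable def descentTime (F : ℝ → ℝ) (B y : ℝ) : ℝ := ∫ t in y..B, (F t)⁻¹

lemma hasDerivAt_descentTime (hF : ContinuousOn F (Ioi H₀)) (hFpos : ∀ y ∈ Ioi H₀, 0 < F y)
    (hB : H₀ < B) {y : ℝ} (hy : H₀ < y) : HasDerivAt (descentTime F B) (-(F y)⁻¹) y := by
  have hinv : ContinuousOn (fun t => (F t)⁻¹) (Ioi H₀) := hF.inv₀ fun t ht => (hFpos t ht).ne'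
  exact intervalIntegral.integral_hasDerivAt_left
    (hinv.mono (ordConnected_Ioi.uIcc_subset hy hB)).intervalIntegrable
    (hinv.stronglyMeasurableAtFilter isOpen_Ioi _ hy) (hinv.continuousAt (isOpen_Ioi.mem_nhds hy))

lemma continuousOn_descentTime (hF : ContinuousOn F (Ioi H₀))
    (hFpos : ∀ y ∈ Ioi H₀, 0 < F y) (hB : H₀ < B) : ContinuousOn (descentTime F B) (Ioi H₀) :=
  fun _ hy => (hasDerivAt_descentTime hF hFpos hB hy).continuousAt.continuousWithinAt

lemma strictAntiOn_descentTime (hF : ContinuousOn F (Ioi H₀))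
    (hFpos : ∀ y ∈ Ioi H₀, 0 < F y) (hB : H₀ < B) : StrictAntiOn (descentTime F B) (Ioi H₀) := by
  refine strictAntiOn_of_hasDerivWithinAt_neg (f' := fun y => -(F y)⁻¹) (convex_Ioi H₀)
    (continuousOn_descentTime hF hFpos hB) (fun y hy => ?_) fun y hy => ?_
  all_goals rw [interior_Ioi] at hy
  · exact (hasDerivAt_descentTime hF hFpos hB hy).hasDerivWithinAt
  · exact neg_neg_iff_pos.2 (inv_pos.2 (hFpos y hy))

/-- Comparison with `F y = M * (y - H₀)`, whose descent time is `-M⁻¹ * log (y - H₀)` up to a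
constant. -/
lemma antitoneOn_descentTime_add_log (hF : ContinuousOn F (Ioi H₀))
    (hFpos : ∀ y ∈ Ioi H₀, 0 < F y) (hFle : ∀ y ∈ Ioi H₀, F y ≤ M * (y - H₀)) (hB : H₀ < B) :
    AntitoneOn (fun y => descentTime F B y + M⁻¹ * Real.log (y - H₀)) (Ioi H₀) := by
  have hderiv : ∀ y ∈ Ioi H₀, HasDerivAt (fun y => descentTime F B y + M⁻¹ * Real.log (y - H₀))
      (-(F y)⁻¹ + M⁻¹ * (1 / (y - H₀))) y := fun y hy =>
    (hasDerivAt_descentTime hF hFpos hB hy).add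
      ((((hasDerivAt_id y).sub_const H₀).log (sub_pos.2 hy).ne').const_mul M⁻¹)
  refine antitoneOn_of_hasDerivWithinAt_nonpos (f' := fun y => -(F y)⁻¹ + M⁻¹ * (1 / (y - H₀)))
    (convex_Ioi H₀) (fun y hy => (hderiv y hy).continuousAt.continuousWithinAt) (fun y hy => ?_) fun y hy => ?_
  all_goals rw [interior_Ioi] at hy
  · exact (hderiv y hy).hasDerivWithinAt
  · have := inv_anti₀ (hFpos y hy) (hFle y hy)
    rw [mul_inv] at this
    rw [one_div]
    linarith

lemma tendsto_descentTime_nhdsGT (hF : ContinuousOn F (Ioi H₀))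
    (hFpos : ∀ y ∈ Ioi H₀, 0 < F y) (hFle : ∀ y ∈ Ioi H₀, F y ≤ M * (y - H₀)) (hB : H₀ < B) :
    Tendsto (descentTime F B) (𝓝[>] H₀) atTop := by
  have hM : 0 < M := pos_of_mul_pos_left ((hFpos B hB).trans_le (hFle B hB)) (sub_pos.2 hB).le
  have hsub : Tendsto (fun y => y - H₀) (𝓝[>] H₀) (𝓝[>] 0) := by
    have := ((continuous_sub_right H₀).tendsto H₀).mono_left (nhdsWithin_le_nhds (s := Ioi H₀))
    rw [sub_self] at this
    exact tendsto_nhdsWithin_iff.2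
      ⟨this, eventually_nhdsWithin_of_forall fun _ hy => mem_Ioi.2 (sub_pos.2 hy)⟩
  have hlog := tendsto_neg_atBot_atTop.comp
    ((Real.tendsto_log_nhdsGT_zero.comp hsub).const_mul_atBot (inv_pos.2 hM))
  refine tendsto_atTop_mono' _ ?_ (tendsto_atTop_add_const_left _
    (descentTime F B B + M⁻¹ * Real.log (B - H₀)) hlog)
  filter_upwards [Ioo_mem_nhdsGT hB] with y hy
  have := antitoneOn_descentTime_add_log hF hFpos hFle hB hy.1 hB hy.2.le
  simp only [Function.comp_apply]
  linarith

lemma tendsto_descentTime_atTop (hF : ContinuousOn F (Ioi H₀))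
    (hFpos : ∀ y ∈ Ioi H₀, 0 < F y) (hFle : ∀ y ∈ Ioi H₀, F y ≤ M * (y - H₀)) (hB : H₀ < B) :
    Tendsto (descentTime F B) atTop atBot := by
  have hM : 0 < M := pos_of_mul_pos_left ((hFpos B hB).trans_le (hFle B hB)) (sub_pos.2 hB).le
  have hlog := tendsto_neg_atTop_atBot.comp ((Real.tendsto_log_atTop.comp
    (tendsto_atTop_add_const_right _ (-H₀) tendsto_id)).const_mul_atTop (inv_pos.2 hM))
  refine tendsto_atBot_mono' _ ?_ (tendsto_atBot_add_const_left _
    (descentTime F B B + M⁻¹ * Real.log (B - H₀)) hlog)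
  filter_upwards [eventually_ge_atTop B] with y hy
  have := antitoneOn_descentTime_add_log hF hFpos hFle hB hB (hB.trans_le hy) hy
  simp only [Function.comp_apply, id, ← sub_eq_add_neg]
  linarith

lemma exists_descentTime_inverse (hF : ContinuousOn F (Ioi H₀))
    (hFpos : ∀ y ∈ Ioi H₀, 0 < F y) (hFle : ∀ y ∈ Ioi H₀, F y ≤ M * (y - H₀)) (hB : H₀ < B) :
    ∃ h : ℝ → ℝ, Continuous h ∧ StrictAnti h ∧ (∀ x, H₀ < h x) ∧
      (∀ x, descentTime F B (h x) = x) ∧ Tendsto h atTop (𝓝[>] H₀) := by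
  let T : Ioi H₀ → ℝ := fun y => -descentTime F B y
  have hmono : StrictMono T := fun a b hab =>
    neg_lt_neg (strictAntiOn_descentTime hF hFpos hB a.2 b.2 hab)
  have hsurj : Function.Surjective T := by
    have hsurjOn := (continuousOn_descentTime hF hFpos hB).surjOn_of_tendsto' nonempty_Ioi
      ((tendsto_comp_coe_Ioi_atBot).2 (tendsto_descentTime_nhdsGT hF hFpos hFle hB))
      ((tendsto_comp_val_Ioi_atTop).2 (tendsto_descentTime_atTop hF hFpos hFle hB))
    intro z
    obtain ⟨y, hy, hyz⟩ := hsurjOn (mem_univ (-z))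
    exact ⟨⟨y, hy⟩, by simp [T, hyz]⟩
  let e := StrictMono.orderIsoOfSurjective T hmono hsurj
  refine ⟨fun x => e.symm (-x), continuous_subtype_val.comp (e.symm.continuous.comp continuous_neg),
    fun a b hab => e.symm.strictMono (neg_lt_neg hab), fun x => (e.symm (-x)).2, fun x => ?_, ?_⟩
  · exact neg_inj.1 (StrictMono.orderIsoOfSurjective_self_symm_apply T hmono hsurj (-x))
  · have hval : Tendsto ((↑) : Ioi H₀ → ℝ) atBot (𝓝[>] H₀) := (map_coe_Ioi_atBot H₀).le
    exact hval.comp (e.symm.tendsto_atBot.comp tendsto_neg_atTop_atBot)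

theorem exists_solution (hF : ContinuousOn F (Ioi H₀))
    (hFpos : ∀ y ∈ Ioi H₀, 0 < F y) (hFle : ∀ y ∈ Ioi H₀, F y ≤ M * (y - H₀)) (hB : H₀ < B) :
    ∃ h : ℝ → ℝ, ContDiff ℝ 1 h ∧ h 0 = B ∧ (∀ x, HasDerivAt h (-F (h x)) x) ∧
      (∀ x, H₀ < h x) ∧ StrictAnti h ∧ Tendsto h atTop (𝓝 H₀) := by
  obtain ⟨h, hcont, hanti, hgt, hT, htend⟩ := exists_descentTime_inverse hF hFpos hFle hB
  have hderiv : ∀ x, HasDerivAt h (-F (h x)) x := fun x => by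
    simpa using (hasDerivAt_descentTime hF hFpos hB (hgt x)).of_local_left_inverse
      hcont.continuousAt (by simpa using (hFpos _ (hgt x)).ne') (.of_forall hT)
  have h0 : h 0 = B := (strictAntiOn_descentTime hF hFpos hB).injOn (hgt 0) hB <| by
    rw [hT, descentTime, intervalIntegral.integral_same]
  refine ⟨h, contDiff_one_iff_deriv.2 ⟨fun x => (hderiv x).differentiableAt, ?_⟩, h0, hderiv, hgt,
    hanti, htend.mono_right nhdsWithin_le_nhds⟩
  rw [funext fun x => (hderiv x).deriv]
  exact (hF.comp_continuous hcont hgt).neg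

lemma descentTime_eq_of_hasDerivWithinAt (hF : ContinuousOn F (Ioi H₀))
    (hFpos : ∀ y ∈ Ioi H₀, 0 < F y) (hB : H₀ < B)
    (hf : ∀ x ∈ Ici (0 : ℝ), HasDerivWithinAt f (-F (f x)) (Ici 0) x) (hf0 : f 0 = B)
    {x : ℝ} (hx : 0 ≤ x) (hgt : ∀ t ∈ Icc 0 x, H₀ < f t) : descentTime F B (f x) = x := by
  have hT : ∀ t ∈ Icc 0 x, HasDerivAt (descentTime F B) (-(F (f t))⁻¹) (f t) := fun t ht =>
    hasDerivAt_descentTime hF hFpos hB (hgt t ht)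
  refine eq_of_has_deriv_right_eq (f := fun t => descentTime F B (f t)) (f' := fun _ => 1)
    (fun t ht => ?_) (fun t _ => hasDerivWithinAt_id t _)
    (fun t ht => (hT t ht).continuousAt.comp_continuousWithinAt
      ((hf t ht.1).continuousWithinAt.mono Icc_subset_Ici_self))
    continuousOn_id (by simp [hf0, descentTime]) x ⟨hx, le_rfl⟩
  have ht' := Ico_subset_Icc_self ht
  have := (hT t ht').comp_hasDerivWithinAt t ((hf t ht'.1).mono (Ici_subset_Ici.2 ht'.1))
  rwa [neg_mul_neg, inv_mul_cancel₀ (hFpos _ (hgt t ht')).ne'] at this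

theorem eqOn_of_hasDerivWithinAt (hF : ContinuousOn F (Ioi H₀))
    (hFpos : ∀ y ∈ Ioi H₀, 0 < F y) (hB : H₀ < B)
    (hf : ∀ x ∈ Ici (0 : ℝ), HasDerivWithinAt f (-F (f x)) (Ici 0) x) (hf0 : f 0 = B)
    (hg : ∀ x ∈ Ici (0 : ℝ), HasDerivWithinAt g (-F (g x)) (Ici 0) x) (hg0 : g 0 = B)
    (hg_gt : ∀ x ∈ Ici (0 : ℝ), H₀ < g x) : EqOn f g (Ici 0) := by
  have heq : ∀ x, 0 ≤ x → (∀ t ∈ Icc 0 x, H₀ < f t) → f x = g x := fun x hx hgt =>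
    (strictAntiOn_descentTime hF hFpos hB).injOn (hgt x ⟨hx, le_rfl⟩) (hg_gt x hx) <| by
      rw [descentTime_eq_of_hasDerivWithinAt hF hFpos hB hf hf0 hx hgt,
        descentTime_eq_of_hasDerivWithinAt hF hFpos hB hg hg0 hx fun t ht => hg_gt t ht.1]
  suffices hgt : ∀ x ∈ Ici (0 : ℝ), H₀ < f x from fun x hx => heq x hx fun t ht => hgt t ht.1
  have hfc : ContinuousOn f (Ici 0) := fun x hx => (hf x hx).continuousWithinAt
  have hgc : ContinuousOn g (Ici 0) := fun x hx => (hg x hx).continuousWithinAt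
  by_contra! hS
  let S := Ici 0 ∩ f ⁻¹' Iic H₀
  have hSbdd : BddBelow S := ⟨0, fun _ ht => ht.1⟩
  obtain ⟨hs0, hfs⟩ : 0 ≤ sInf S ∧ f (sInf S) ≤ H₀ :=
    (hfc.preimage_isClosed_of_isClosed isClosed_Ici isClosed_Iic).csInf_mem hS hSbdd
  have hbefore : ∀ t ∈ Ico 0 (sInf S), H₀ < f t := fun t ht =>
    not_le.1 fun hle => (csInf_le hSbdd ⟨ht.1, hle⟩).not_gt ht.2
  have hs : 0 < sInf S := hs0.lt_of_ne fun h => by rw [← h, hf0] at hfs; exact hfs.not_gt hB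
  have hfg : EqOn f g (Icc 0 (sInf S)) :=
    EqOn.of_subset_closure (fun t ht => heq t ht.1 fun u hu => hbefore u ⟨hu.1, hu.2.trans_lt ht.2⟩)
      (hfc.mono Icc_subset_Ici_self) (hgc.mono Icc_subset_Ici_self) Ico_subset_Icc_self
      (closure_Ico hs.ne).ge
  exact hfs.not_gt (hfg ⟨hs0, le_rfl⟩ ▸ hg_gt _ hs0)

noncomputable def profileSlope (H₀ K A B y : ℝ) : ℝ := √(K * (y - H₀) ^ 2 * (y + A) / (y + B))

variable {K A : ℝ}

lemma continuousOn_profileSlope (hH : 0 ≤ H₀) (hB : 0 < B) :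
    ContinuousOn (profileSlope H₀ K A B) (Ioi H₀) :=
  ((by fun_prop : Continuous fun y => K * (y - H₀) ^ 2 * (y + A)).continuousOn.div
    (by fun_prop) fun y (hy : H₀ < y) => by linarith).sqrt

lemma profileSlope_pos (hH : 0 ≤ H₀) (hK : 0 < K) (hA : 0 ≤ A) (hB : 0 < B) {y : ℝ}
    (hy : H₀ < y) : 0 < profileSlope H₀ K A B y := by
  have : 0 < y - H₀ := sub_pos.2 hy
  exact Real.sqrt_pos.2 (div_pos (mul_pos (by positivity) (by linarith)) (by linarith))

lemma profileSlope_le (hH : 0 ≤ H₀) (hK : 0 ≤ K) (hA : 0 ≤ A) (hB : 0 < B) {y : ℝ}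
    (hy : H₀ < y) : profileSlope H₀ K A B y ≤ √(K * (A + B) / B) * (y - H₀) := by
  have hq : (y + A) / (y + B) ≤ (A + B) / B := by
    rw [div_le_div_iff₀ (by linarith) hB]
    nlinarith
  calc profileSlope H₀ K A B y = √(K * (y - H₀) ^ 2 * ((y + A) / (y + B))) := by
        rw [profileSlope, mul_div_assoc]
    _ ≤ √(K * (y - H₀) ^ 2 * ((A + B) / B)) := by gcongr
    _ = √(K * (A + B) / B) * (y - H₀) := by
        rw [show K * (y - H₀) ^ 2 * ((A + B) / B) = K * (A + B) / B * (y - H₀) ^ 2 by ring,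
          Real.sqrt_mul' _ (sq_nonneg _), Real.sqrt_sq (sub_pos.2 hy).le]

end PeakedWave

open PeakedWave in
theorem peaked_wave_existence_uniqueness_general
    (H₀ Einf vs hcrit c : ℝ) (hH : 0 < H₀) (hE : 0 < Einf)
    (hv : 0 < vs) (hcrit_gt : H₀ < hcrit) (hc : 0 < c) :
    ∃ h : ℝ → ℝ,
      (ContDiffOn ℝ 1 h (Set.Ici 0) ∧ h 0 = hcrit ∧
        (∀ x ∈ Set.Ici (0 : ℝ), HasDerivWithinAt h
          (-Real.sqrt ((3 * Einf / (c * H₀ ^ 3 * vs)) * (h x - H₀) ^ 2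
            * (h x + (vs ^ 2 / Einf) * (hcrit ^ 3 / H₀)) / (h x + hcrit)))
          (Set.Ici 0) x)) ∧
      (∀ x ∈ Set.Ici (0 : ℝ), H₀ < h x ∧ h x ≤ hcrit) ∧
      StrictAntiOn h (Set.Ici 0) ∧
      Tendsto h atTop (nhds H₀) ∧
      (∀ h₂ : ℝ → ℝ,
        (ContDiffOn ℝ 1 h₂ (Set.Ici 0) ∧ h₂ 0 = hcrit ∧
          (∀ x ∈ Set.Ici (0 : ℝ), HasDerivWithinAt h₂
            (-Real.sqrt ((3 * Einf / (c * H₀ ^ 3 * vs)) * (h₂ x - H₀) ^ 2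
              * (h₂ x + (vs ^ 2 / Einf) * (hcrit ^ 3 / H₀)) / (h₂ x + hcrit)))
            (Set.Ici 0) x)) →
        Set.EqOn h h₂ (Set.Ici 0)) := by
  have hB : 0 < hcrit := hH.trans hcrit_gt
  have hK : 0 < 3 * Einf / (c * H₀ ^ 3 * vs) := by positivity
  have hA : 0 ≤ vs ^ 2 / Einf * (hcrit ^ 3 / H₀) := by positivity
  set K := 3 * Einf / (c * H₀ ^ 3 * vs)
  set A := vs ^ 2 / Einf * (hcrit ^ 3 / H₀)
  have hF := continuousOn_profileSlope (K := K) (A := A) hH.le hB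
  have hFpos : ∀ y ∈ Ioi H₀, 0 < profileSlope H₀ K A hcrit y := fun _ =>
    profileSlope_pos hH.le hK hA hB
  obtain ⟨h, hC1, h0, hderiv, hgt, hanti, htend⟩ :=
    exists_solution hF hFpos (fun _ => profileSlope_le hH.le hK.le hA hB) hcrit_gt
  refine ⟨h, ⟨hC1.contDiffOn, h0, fun x _ => (hderiv x).hasDerivWithinAt⟩,
    fun x hx => ⟨hgt x, h0 ▸ hanti.antitone hx⟩, hanti.strictAntiOn _, htend, ?_⟩
  rintro h₂ ⟨-, h₂0, hderiv₂⟩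
  exact (eqOn_of_hasDerivWithinAt hF hFpos hcrit_gt hderiv₂ h₂0
    (fun x _ => (hderiv x).hasDerivWithinAt) h0 fun x _ => hgt x).symm

/-- Existence (and uniqueness on `[0, ∞)`) of the right half of
the peaked solitary wave of critical maximal amplitude `hcrit` and speed `c̄`. -/
theorem peaked_wave_existence_uniqueness
    (g H₀ Einf vs hcrit c : ℝ) (hg : 0 < g) (hH : 0 < H₀) (hE : 0 < Einf)
    (hv : 0 < vs) (hcrit_gt : H₀ < hcrit) (hc : 0 < c)
    (hc2 : c ^ 2 = g * hcrit + hcrit * (hcrit + 2 * H₀) * Einf / H₀ ^ 3)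
    (hrel : c * H₀ ^ 2 = vs * hcrit ^ 2) :
    ∃ h : ℝ → ℝ,
      (ContDiffOn ℝ 1 h (Set.Ici 0) ∧ h 0 = hcrit ∧
        (∀ x ∈ Set.Ici (0 : ℝ), HasDerivWithinAt h
          (-Real.sqrt ((3 * Einf / (c * H₀ ^ 3 * vs)) * (h x - H₀) ^ 2
            * (h x + (vs ^ 2 / Einf) * (hcrit ^ 3 / H₀)) / (h x + hcrit)))
          (Set.Ici 0) x)) ∧
      (∀ x ∈ Set.Ici (0 : ℝ), H₀ < h x ∧ h x ≤ hcrit) ∧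
      StrictAntiOn h (Set.Ici 0) ∧
      Tendsto h atTop (nhds H₀) ∧
      (∀ h₂ : ℝ → ℝ,
        (ContDiffOn ℝ 1 h₂ (Set.Ici 0) ∧ h₂ 0 = hcrit ∧
          (∀ x ∈ Set.Ici (0 : ℝ), HasDerivWithinAt h₂
            (-Real.sqrt ((3 * Einf / (c * H₀ ^ 3 * vs)) * (h₂ x - H₀) ^ 2
              * (h₂ x + (vs ^ 2 / Einf) * (hcrit ^ 3 / H₀)) / (h₂ x + hcrit)))
            (Set.Ici 0) x)) →
        Set.EqOn h h₂ (Set.Ici 0)) :=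
  peaked_wave_existence_uniqueness_general H₀ Einf vs hcrit c hH hE hv hcrit_gt hc
end

section
/- Let g > 0, H₀ > 0, E∞ > 0, v♯∞ > 0, and let h_crit > H₀ and c̄ > 0 satisfy c̄² = g·h_crit + h_crit·(h_crit + 2H₀)·E∞/H₀³ and c̄·H₀² = v♯∞·h_crit². Let h : [0, ∞) → ℝ be the solution of h'(x) = −((3·E∞/(c̄·H₀³·v♯∞))·(h(x) − H₀)²·(h(x) + ((v♯∞)²/E∞)·(h_crit³/H₀))/(h(x) + h_crit))^{1/2} with h(0) = h_crit. Then the slope at the crest satisfies h'(0) = −((3/2)·(E∞/(c̄·H₀³·v♯∞))·(h_crit − H₀)²·(1 + ((v♯∞)²/E∞)·(h_crit²/H₀)))^{1/2}; equivalently, the peaked solitary wave forms an angle 2θ at its crest where tan θ = ((3/2)·(E∞/(c̄·H₀³·v♯∞))·(h_crit − H₀)²·(1 + ((v♯∞)²/E∞)·(h_crit²/H₀)))^{−1/2}. -/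
/-- The slope at the crest of the peaked solitary wave of
critical amplitude: the wave forms an angle `2θ` at its crest with
`tan θ = ((3/2)·(E∞/(c̄·H₀³·v♯∞))·(hcrit − H₀)²·(1 + (v♯∞)²·hcrit²/(E∞·H₀)))^{-1/2}`. -/
theorem peaked_wave_crest_slope
    (g H₀ Einf vs hcrit c : ℝ) (hg : 0 < g) (hH : 0 < H₀) (hE : 0 < Einf)
    (hv : 0 < vs) (hcrit_gt : H₀ < hcrit) (hc : 0 < c)
    (hc2 : c ^ 2 = g * hcrit + hcrit * (hcrit + 2 * H₀) * Einf / H₀ ^ 3)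
    (hrel : c * H₀ ^ 2 = vs * hcrit ^ 2)
    (h : ℝ → ℝ) (h0 : h 0 = hcrit)
    (hode : ∀ x ∈ Set.Ici (0 : ℝ), HasDerivWithinAt h
      (-Real.sqrt ((3 * Einf / (c * H₀ ^ 3 * vs)) * (h x - H₀) ^ 2
        * (h x + (vs ^ 2 / Einf) * (hcrit ^ 3 / H₀)) / (h x + hcrit)))
      (Set.Ici 0) x) :
    derivWithin h (Set.Ici 0) 0 =
      -Real.sqrt ((3 / 2) * (Einf / (c * H₀ ^ 3 * vs)) * (hcrit - H₀) ^ 2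
        * (1 + (vs ^ 2 / Einf) * (hcrit ^ 2 / H₀))) := by
  have hd := (hode 0 Set.self_mem_Ici).derivWithin
    ((uniqueDiffOn_Ici 0) 0 Set.self_mem_Ici)
  rw [hd, h0]
  have hcr : (0:ℝ) < hcrit := lt_trans hH hcrit_gt
  congr 2
  have hden : hcrit + hcrit ≠ 0 := by positivity
  field_simp
  ring
end

section
/- Let c ≠ 0, H₀ > 0, F∞ ∈ ℝ, E∞ ∈ ℝ, and let h : ℝ → ℝ be a differentiable positive function. Define E(x) = (h(x)³/H₀³)·E∞ + 2·(F∞/c)·((h(x)² − H₀²)·h(x)³/H₀⁵). Then E satisfies, at every x, the equation −c·H₀·(E/h³)'(x) + 4·(F∞/H₀⁴)·h(x)·h'(x) = 0, and E = E∞ wherever h = H₀. (This identifies the traveling-wave form of the vorticity tensor E along a solitary wave in terms of the water height.) -/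
/-! Divided by `h³`, the profile `E` is the affine function `E∞/H₀³ + 2 (F∞/c) (h² - H₀²)/H₀⁵` of
`h²`, so `(E/h³)' = 4 (F∞/c) h h'/H₀⁵`, and multiplying by `-c H₀` cancels the source term
`4 (F∞/H₀⁴) h h'` exactly. -/

noncomputable def travelingWaveE (c H₀ Finf Einf a : ℝ) : ℝ :=
  (a ^ 3 / H₀ ^ 3) * Einf + 2 * (Finf / c) * ((a ^ 2 - H₀ ^ 2) * a ^ 3 / H₀ ^ 5)

lemma travelingWaveE_self {H₀ : ℝ} (hH : H₀ ≠ 0) (c Finf Einf : ℝ) :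
    travelingWaveE c H₀ Finf Einf H₀ = Einf := by
  unfold travelingWaveE
  field_simp
  ring

lemma travelingWaveE_div_cube {H₀ a : ℝ} (hH : H₀ ≠ 0) (ha : a ≠ 0) (c Finf Einf : ℝ) :
    travelingWaveE c H₀ Finf Einf a / a ^ 3
      = Einf / H₀ ^ 3 + 2 * (Finf / c) / H₀ ^ 5 * (a ^ 2 - H₀ ^ 2) := by
  unfold travelingWaveE
  field_simp

lemma deriv_const_add_mul_sq_sub {h : ℝ → ℝ} {x : ℝ} (hx : DifferentiableAt ℝ h x)
    (A B K : ℝ) :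
    deriv (fun y => A + B * (h y ^ 2 - K)) x = B * (2 * h x * deriv h x) := by
  have hsq : HasDerivAt (fun y => h y ^ 2 - K) (2 * h x * deriv h x) x := by
    simpa using (hx.hasDerivAt.pow 2).sub_const K
  exact ((hsq.const_mul B).const_add A).deriv

/-- The traveling-wave form of the vorticity tensor `E` along a
solitary wave satisfies the traveling-wave evolution equation for `E`, and
equals `E∞` wherever `h = H₀`. -/
theorem traveling_wave_E_equation
    (c H₀ Finf Einf : ℝ) (hc : c ≠ 0) (hH : 0 < H₀)
    (h : ℝ → ℝ) (hdiff : Differentiable ℝ h) (hpos : ∀ x, 0 < h x)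
    (Efun : ℝ → ℝ)
    (hEdef : ∀ x, Efun x = ((h x) ^ 3 / H₀ ^ 3) * Einf
      + 2 * (Finf / c) * (((h x) ^ 2 - H₀ ^ 2) * (h x) ^ 3 / H₀ ^ 5)) :
    (∀ x, -(c * H₀) * deriv (fun y => Efun y / (h y) ^ 3) x
      + 4 * (Finf / H₀ ^ 4) * h x * deriv h x = 0) ∧
    (∀ x, h x = H₀ → Efun x = Einf) := by
  have hE : Efun = fun y => travelingWaveE c H₀ Finf Einf (h y) := funext hEdef
  subst hE
  refine ⟨fun x => ?_, fun x hx => by simp only [hx, travelingWaveE_self hH.ne']⟩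
  have hratio : (fun y => travelingWaveE c H₀ Finf Einf (h y) / h y ^ 3)
      = fun y => Einf / H₀ ^ 3 + 2 * (Finf / c) / H₀ ^ 5 * (h y ^ 2 - H₀ ^ 2) :=
    funext fun y => travelingWaveE_div_cube hH.ne' (hpos y).ne' c Finf Einf
  rw [hratio, deriv_const_add_mul_sq_sub (hdiff x)]
  field_simp
  ring
end
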